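/- Let $1\le r<\infty$, $\kappa>0$ and $a\in(0,1)$. Define $\Psi_\kappa(t):=\int_0^t s^{\kappa-1}\left(\log\left(s^{1/r}+s^{-1/r}\right)\right)^{-r}ds$. Then for every $t\in(0,a)\cup(a^{-1},\infty)$, $\Psi_\kappa(t^r)\le \frac{1}{\kappa(\log 2)^r}\left(a^{(r-1)\kappa}+\left(\log\left(a^{1/r}+a^{-1/r}\right)\right)^{-r}\right)t^{r\kappa}$. -/

import Mathlib

open Real MeasureTheory Set

/-! The logarithmic factor `L(s) = log(s^{1/r} + s^{-1/r})` is at least `log 2` everywhere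
and, being invariant under `s ↦ s⁻¹` and decreasing on `(0, 1]`, at least `L(a)` on `(0, a]` and
on `[a⁻¹, ∞)`. For `t < a` the whole range `(0, t^r]` lies in `(0, a]`. For `t > a⁻¹` split the
integral at `s₀ = a^{r-1} t^r ≥ a⁻¹`: below `s₀` use `L ≥ log 2`, which costs
`s₀^κ = a^{(r-1)κ} t^{rκ}`, above it use `L ≥ L(a)`. -/

/-- `Ψ_κ(t) = ∫_0^t s^{κ-1} (log(s^{1/r} + s^{-1/r}))^{-r} ds`. -/
noncomputable def Psi (r κ t : ℝ) : ℝ :=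
  ∫ s in (0:ℝ)..t, s ^ (κ - 1) * (Real.log (s ^ (1 / r) + s ^ (-(1 / r)))) ^ (-r)

lemma add_inv_le_add_inv_of_le {x y : ℝ} (hx : 0 < x) (hxy : x ≤ y) (hy : y ≤ 1) :
    y + y⁻¹ ≤ x + x⁻¹ := by
  have hy0 : 0 < y := hx.trans_le hxy
  have hxy1 : x * y ≤ 1 := by nlinarith
  have key : x + x⁻¹ - (y + y⁻¹) = (y - x) * (1 - x * y) / (x * y) := by field_simp; ring
  have : 0 ≤ (y - x) * (1 - x * y) / (x * y) := by
    apply div_nonneg (mul_nonneg _ _) (mul_pos hx hy0).le <;> linarith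
  linarith

lemma split_bound_le {P X A T u κ : ℝ} (hP : 0 < P) (hP1 : P ≤ 1) (hX : 0 ≤ X) (hκ : 0 < κ)
    (hu : 0 ≤ u) (huA : u ≤ A * T) (huT : u ≤ T) :
    P⁻¹ * (u / κ) + X * ((T - u) / κ) ≤ 1 / (κ * P) * (A + X) * T := by
  have hXT : X * (T - u) ≤ P⁻¹ * (X * T) := by
    have : X * T ≤ P⁻¹ * (X * T) :=
      le_mul_of_one_le_left (mul_nonneg hX (hu.trans huT)) ((one_le_inv₀ hP).2 hP1)
    nlinarith
  have hAT : P⁻¹ * u ≤ P⁻¹ * (A * T) := mul_le_mul_of_nonneg_left huA (inv_pos.2 hP).le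
  calc P⁻¹ * (u / κ) + X * ((T - u) / κ) = (P⁻¹ * u + X * (T - u)) / κ := by ring
    _ ≤ (P⁻¹ * (A * T) + P⁻¹ * (X * T)) / κ := by gcongr
    _ = 1 / (κ * P) * (A + X) * T := by field_simp

namespace Psi

noncomputable def logFactor (r s : ℝ) : ℝ := Real.log (s ^ (1 / r) + s ^ (-(1 / r)))

noncomputable def integrand (r κ s : ℝ) : ℝ := s ^ (κ - 1) * logFactor r s ^ (-r)

lemma eq_integral_integrand (r κ t : ℝ) : Psi r κ t = ∫ s in (0:ℝ)..t, integrand r κ s := rfl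

variable {r κ : ℝ}

lemma logFactor_eq {s : ℝ} (hs : 0 < s) :
    logFactor r s = Real.log (s ^ (1 / r) + (s ^ (1 / r))⁻¹) := by
  rw [logFactor, rpow_neg hs.le]

lemma logFactor_inv {s : ℝ} (hs : 0 < s) : logFactor r s⁻¹ = logFactor r s := by
  rw [logFactor_eq hs, logFactor_eq (inv_pos.2 hs), inv_rpow hs.le, inv_inv, add_comm]

lemma log_two_le_logFactor {s : ℝ} (hs : 0 < s) : Real.log 2 ≤ logFactor r s := by
  rw [logFactor_eq hs]
  have hx : 0 < s ^ (1 / r) := rpow_pos_of_pos hs _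
  refine Real.log_le_log two_pos ?_
  nlinarith [sq_nonneg (s ^ (1 / r) - 1), mul_inv_cancel₀ hx.ne']

lemma logFactor_pos {s : ℝ} (hs : 0 < s) : 0 < logFactor r s :=
  (Real.log_pos one_lt_two).trans_le (log_two_le_logFactor hs)

lemma logFactor_le_of_le (hr : 0 ≤ r) {a s : ℝ} (hs : 0 < s) (hsa : s ≤ a) (ha : a ≤ 1) :
    logFactor r a ≤ logFactor r s := by
  have ha0 : 0 < a := hs.trans_le hsa
  have hr' : 0 ≤ 1 / r := by positivity
  rw [logFactor_eq hs, logFactor_eq ha0]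
  refine Real.log_le_log (by positivity) (add_inv_le_add_inv_of_le (rpow_pos_of_pos hs _)
    (rpow_le_rpow hs.le hsa hr') (rpow_le_one ha0.le ha hr'))

lemma logFactor_le_of_inv_le (hr : 0 ≤ r) {a s : ℝ} (ha : 0 < a) (ha1 : a ≤ 1) (hs : a⁻¹ ≤ s) :
    logFactor r a ≤ logFactor r s := by
  have hs0 : 0 < s := (inv_pos.2 ha).trans_le hs
  rw [← logFactor_inv hs0]
  exact logFactor_le_of_le hr (inv_pos.2 hs0) (inv_le_of_inv_le₀ ha hs) ha1

lemma integrand_nonneg {s : ℝ} (hs : 0 < s) : 0 ≤ integrand r κ s :=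
  mul_nonneg (rpow_nonneg hs.le _) (rpow_nonneg (logFactor_pos hs).le _)

lemma integrand_le (hr : 0 ≤ r) {M s : ℝ} (hM : 0 < M) (hs : 0 < s) (h : M ≤ logFactor r s) :
    integrand r κ s ≤ s ^ (κ - 1) * M ^ (-r) :=
  mul_le_mul_of_nonneg_left (rpow_le_rpow_of_nonpos hM h (neg_nonpos.2 hr))
    (rpow_nonneg hs.le _)

lemma intervalIntegrable_integrand (hr : 0 ≤ r) (hκ : 0 < κ) {c d : ℝ} (hc : 0 ≤ c)
    (hcd : c ≤ d) : IntervalIntegrable (integrand r κ) volume c d := by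
  have hbound : IntervalIntegrable (fun s ↦ s ^ (κ - 1) * Real.log 2 ^ (-r)) volume c d :=
    (intervalIntegral.intervalIntegrable_rpow' (by linarith)).mul_const _
  have hmeas : Measurable (integrand r κ) := by
    unfold integrand logFactor; measurability
  refine hbound.mono_fun' hmeas.aestronglyMeasurable ?_
  rw [Filter.EventuallyLE, ae_restrict_iff' measurableSet_uIoc]
  refine Filter.Eventually.of_forall fun s hs ↦ ?_
  rw [uIoc_of_le hcd] at hs
  have hs0 : 0 < s := hc.trans_lt hs.1
  rw [Real.norm_of_nonneg (integrand_nonneg hs0)]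
  exact integrand_le hr (Real.log_pos one_lt_two) hs0 (log_two_le_logFactor hs0)

lemma integral_integrand_le (hr : 0 ≤ r) (hκ : 0 < κ) {c d M : ℝ} (hc : 0 ≤ c) (hcd : c ≤ d)
    (hM : 0 < M) (hb : ∀ s ∈ Ioo c d, M ≤ logFactor r s) :
    ∫ s in c..d, integrand r κ s ≤ M ^ (-r) * ((d ^ κ - c ^ κ) / κ) := by
  have hg : IntervalIntegrable (fun s ↦ s ^ (κ - 1) * M ^ (-r)) volume c d :=
    (intervalIntegral.intervalIntegrable_rpow' (by linarith)).mul_const _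
  calc ∫ s in c..d, integrand r κ s
      ≤ ∫ s in c..d, s ^ (κ - 1) * M ^ (-r) :=
        intervalIntegral.integral_mono_on_of_le_Ioo hcd
          (intervalIntegrable_integrand hr hκ hc hcd) hg
          fun s hs ↦ integrand_le hr hM (hc.trans_lt hs.1) (hb s hs)
    _ = M ^ (-r) * ((d ^ κ - c ^ κ) / κ) := by
        rw [intervalIntegral.integral_mul_const, integral_rpow (Or.inl (by linarith)),
          sub_add_cancel, mul_comm]

lemma le_of_split (hr : 0 ≤ r) (hκ : 0 < κ) {s₀ d M : ℝ} (hs₀ : 0 ≤ s₀) (hs₀d : s₀ ≤ d)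
    (hM : 0 < M) (hb : ∀ s ∈ Ioo s₀ d, M ≤ logFactor r s) :
    Psi r κ d ≤ Real.log 2 ^ (-r) * (s₀ ^ κ / κ) + M ^ (-r) * ((d ^ κ - s₀ ^ κ) / κ) := by
  have hlow := integral_integrand_le hr hκ le_rfl hs₀ (Real.log_pos one_lt_two)
    (r := r) (κ := κ) fun s hs ↦ log_two_le_logFactor hs.1
  rw [zero_rpow hκ.ne', sub_zero] at hlow
  rw [eq_integral_integrand, ← intervalIntegral.integral_add_adjacent_intervals
    (intervalIntegrable_integrand hr hκ le_rfl hs₀) (intervalIntegrable_integrand hr hκ hs₀ hs₀d)]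
  exact add_le_add hlow (integral_integrand_le hr hκ hs₀ hs₀d hM hb)

structure IsSplitPoint (r κ a t s₀ : ℝ) : Prop where
  nonneg : 0 ≤ s₀
  le_rpow : s₀ ≤ t ^ r
  rpow_le : s₀ ^ κ ≤ a ^ ((r - 1) * κ) * t ^ (r * κ)
  logFactor_le : ∀ s ∈ Ioo s₀ (t ^ r), logFactor r a ≤ logFactor r s

lemma exists_isSplitPoint_of_lt {a t : ℝ} (hr : 1 ≤ r) (hκ : 0 < κ) (ha1 : a < 1)
    (ht0 : 0 < t) (hta : t < a) : ∃ s₀, IsSplitPoint r κ a t s₀ := by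
  have htra : t ^ r ≤ a :=
    calc t ^ r ≤ t ^ (1 : ℝ) := rpow_le_rpow_of_exponent_ge ht0 (hta.trans ha1).le hr
      _ ≤ a := by rw [rpow_one]; exact hta.le
  refine ⟨0, le_rfl, rpow_nonneg ht0.le _, ?_, fun s hs ↦ ?_⟩
  · rw [zero_rpow hκ.ne']
    exact mul_nonneg (rpow_nonneg (ht0.trans hta).le _) (rpow_nonneg ht0.le _)
  · exact logFactor_le_of_le (by linarith) hs.1 (hs.2.le.trans htra) ha1.le

lemma exists_isSplitPoint_of_inv_lt {a t : ℝ} (hr : 1 ≤ r) (ha0 : 0 < a) (ha1 : a < 1)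
    (hta : a⁻¹ < t) : ∃ s₀, IsSplitPoint r κ a t s₀ := by
  have ht0 : 0 < t := (inv_pos.2 ha0).trans hta
  have hinv : a⁻¹ ≤ a ^ (r - 1) * t ^ r :=
    calc a⁻¹ = a ^ (r - 1) * a⁻¹ ^ r := by
          rw [inv_rpow ha0.le, ← rpow_neg ha0.le, ← rpow_add ha0,
            show r - 1 + -r = -1 by ring, rpow_neg_one]
      _ ≤ a ^ (r - 1) * t ^ r := by gcongr
  refine ⟨a ^ (r - 1) * t ^ r, by positivity, ?_, ?_, fun s hs ↦ ?_⟩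
  · exact mul_le_of_le_one_left (by positivity) (rpow_le_one ha0.le ha1.le (by linarith))
  · rw [mul_rpow (by positivity) (by positivity), ← rpow_mul ha0.le, ← rpow_mul ht0.le]
  · exact logFactor_le_of_inv_le (by linarith) ha0 ha1.le (hinv.trans hs.1.le)

end Psi

open Psi

/-- for `1 ≤ r < ∞`, `κ > 0`, `a ∈ (0,1)` and every
`t ∈ (0,a) ∪ (a⁻¹,∞)`,
`Ψ_κ(t^r) ≤ (κ (log 2)^r)⁻¹ (a^{(r-1)κ} + (log(a^{1/r} + a^{-1/r}))^{-r}) t^{rκ}`. -/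
theorem stmt8 (r κ a : ℝ) (hr : 1 ≤ r) (hκ : 0 < κ) (ha0 : 0 < a) (ha1 : a < 1)
    (t : ℝ) (ht : (0 < t ∧ t < a) ∨ a⁻¹ < t) :
    Psi r κ (t ^ r) ≤
      (1 / (κ * Real.log 2 ^ r)) *
        (a ^ ((r - 1) * κ) + (Real.log (a ^ (1 / r) + a ^ (-(1 / r)))) ^ (-r)) *
        t ^ (r * κ) := by
  have hr0 : 0 ≤ r := by linarith
  have ht0 : 0 < t := by rcases ht with h | h; exacts [h.1, (inv_pos.2 ha0).trans h]
  obtain ⟨s₀, hs₀, hs₀t, hs₀A, hb⟩ : ∃ s₀, IsSplitPoint r κ a t s₀ := by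
    rcases ht with ⟨-, hta⟩ | hta
    exacts [exists_isSplitPoint_of_lt hr hκ ha1 ht0 hta,
      exists_isSplitPoint_of_inv_lt hr ha0 ha1 hta]
  have hlog2 : 0 < Real.log 2 := Real.log_pos one_lt_two
  have hlog2_le : Real.log 2 ^ r ≤ 1 :=
    rpow_le_one hlog2.le ((Real.log_le_sub_one_of_pos two_pos).trans (by norm_num)) hr0
  have hT : (t ^ r) ^ κ = t ^ (r * κ) := (rpow_mul ht0.le r κ).symm
  calc Psi r κ (t ^ r)
      ≤ Real.log 2 ^ (-r) * (s₀ ^ κ / κ) +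
          logFactor r a ^ (-r) * (((t ^ r) ^ κ - s₀ ^ κ) / κ) :=
        le_of_split hr0 hκ hs₀ hs₀t (logFactor_pos ha0) hb
    _ ≤ _ := by
        rw [rpow_neg hlog2.le, hT]
        exact split_bound_le (by positivity) hlog2_le (rpow_nonneg (logFactor_pos ha0).le _) hκ
          (by positivity) hs₀A (hT ▸ rpow_le_rpow hs₀ hs₀t hκ.le)
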